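/- Every word in the commutation class of w arises as w(e) for some linear extension e of P(w); hence the number of words in the commutation class of w equals the number of linear extensions of P(w). -/

import Mathlib

def CommMove {S : Type*} (comm : S → S → Prop) (w w' : List S) : Prop :=
  ∃ (u v : List S) (a b : S), comm a b ∧ w = u ++ a :: b :: v ∧ w' = u ++ b :: a :: v

def CommClass {S : Type*} (comm : S → S → Prop) : List S → List S → Prop :=
  Relation.ReflTransGen (CommMove comm)

def WStep {S : Type*} (comm : S → S → Prop) (w : List S) (i j : Fin w.length) : Prop :=
  i ≤ j ∧ (w.get i = w.get j ∨ ¬ comm (w.get i) (w.get j))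

/-- The word-poset order `≤_w` on positions of `w`. -/
def WLe {S : Type*} (comm : S → S → Prop) (w : List S) : Fin w.length → Fin w.length → Prop :=
  Relation.TransGen (WStep comm w)

/-- A linear extension of the word poset `P(w)`. -/
def IsLinExt {S : Type*} (comm : S → S → Prop) (w : List S)
    (e : Fin w.length ≃ Fin w.length) : Prop :=
  ∀ i j, WLe comm w i j → e i ≤ e j

/-- The word `w(e)` associated to a linear extension `e`: `w(e)_i = w_{e⁻¹(i)}`. -/
def wordOf {S : Type*} (w : List S) (e : Fin w.length ≃ Fin w.length) : List S :=
  List.ofFn (fun i => w.get (e.symm i))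

/-!
A linear extension `e` can be sorted to the identity by repeatedly exchanging two values
`k, k + 1` whose preimages are out of order. Such an exchange keeps `e` a linear extension,
removes an inversion, and changes `w(e)` by a commutation move, so `w(e)` is commutation
equivalent to `w`. Conversely, a move `ab → ba` in `w(e)` with `a ≠ b` commuting exchanges two
positions adjacent in `e` that are incomparable in `P(w)`, which yields another linear extension.
Finally `e` is determined by `w(e)`: positions carrying equal letters form a chain of `P(w)`, so
`e⁻¹` matches the occurrences of each letter in `w(e)` with those in `w` in order.
-/

def adjSwap {n : ℕ} (k : ℕ) (hk : k + 1 < n) : Equiv.Perm (Fin n) :=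
  Equiv.swap ⟨k, by omega⟩ ⟨k + 1, hk⟩

@[simp] lemma adjSwap_adjSwap {n k : ℕ} (hk : k + 1 < n) (a : Fin n) :
    adjSwap k hk (adjSwap k hk a) = a :=
  Equiv.swap_apply_self _ _ _

@[simp] lemma adjSwap_left {n k : ℕ} (hk : k + 1 < n) :
    adjSwap k hk ⟨k, by omega⟩ = ⟨k + 1, hk⟩ :=
  Equiv.swap_apply_left _ _

@[simp] lemma adjSwap_right {n k : ℕ} (hk : k + 1 < n) :
    adjSwap k hk ⟨k + 1, hk⟩ = ⟨k, by omega⟩ :=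
  Equiv.swap_apply_right _ _

lemma adjSwap_val {n k : ℕ} (hk : k + 1 < n) (a : Fin n) :
    (adjSwap k hk a : ℕ) = if (a : ℕ) = k then k + 1 else if (a : ℕ) = k + 1 then k else a := by
  rw [adjSwap, Equiv.swap_apply_def]
  split_ifs <;> simp_all [Fin.ext_iff]

lemma adjSwap_le_adjSwap {n k : ℕ} (hk : k + 1 < n) {a b : Fin n} (hab : a ≤ b)
    (h : ¬ ((a : ℕ) = k ∧ (b : ℕ) = k + 1)) : adjSwap k hk a ≤ adjSwap k hk b := by
  rw [Fin.le_def, adjSwap_val, adjSwap_val]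
  rw [Fin.le_def] at hab
  split_ifs <;> omega

lemma ofFn_comp_adjSwap_of_eq {S : Type*} {n k : ℕ} {f : Fin n → S} {u v : List S} {a b : S}
    (h : List.ofFn f = u ++ a :: b :: v) (hu : u.length = k) (hk : k + 1 < n) :
    List.ofFn (f ∘ adjSwap k hk) = u ++ b :: a :: v := by
  have hlen : n = u.length + 2 + v.length := by
    simpa [add_assoc, add_comm, add_left_comm] using congrArg List.length h
  have hf : ∀ i (hi : i < n), f ⟨i, hi⟩ = (u ++ a :: b :: v)[i]'(by simp; omega) := by
    intro i hi
    simp only [← h, List.getElem_ofFn]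
  apply List.ext_getElem (by simp; omega)
  intro i h1 h2
  simp only [List.getElem_ofFn, Function.comp_apply]
  rw [← Fin.eta (adjSwap k hk _) (adjSwap k hk _).isLt, hf]
  simp only [adjSwap_val, List.getElem_append, List.getElem_cons]
  split_ifs <;> first | omega | rfl

lemma commMove_ofFn_comp_adjSwap {S : Type*} {comm : S → S → Prop} {n k : ℕ} (f : Fin n → S)
    (hk : k + 1 < n) (h : comm (f ⟨k, by omega⟩) (f ⟨k + 1, hk⟩)) :
    CommMove comm (List.ofFn f) (List.ofFn (f ∘ adjSwap k hk)) := by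
  have hf : List.ofFn f =
      (List.ofFn f).take k ++ f ⟨k, by omega⟩ :: f ⟨k + 1, hk⟩ :: (List.ofFn f).drop (k + 2) := by
    conv_lhs => rw [← List.take_append_drop k (List.ofFn f)]
    rw [List.drop_eq_getElem_cons (by simp; omega), List.drop_eq_getElem_cons (by simp; omega)]
    simp
  exact ⟨_, _, _, _, h, hf, ofFn_comp_adjSwap_of_eq hf (by simp; omega) hk⟩

lemma Equiv.Perm.eq_refl_of_le_succ {n : ℕ} (e : Equiv.Perm (Fin n))
    (h : ∀ k (hk : k + 1 < n), e ⟨k, by omega⟩ ≤ e ⟨k + 1, hk⟩) : e = Equiv.refl _ := by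
  obtain _ | n := n
  · exact Subsingleton.elim _ _
  have hmono : StrictMono e := Fin.strictMono_iff_lt_succ.2 fun i =>
    (h i i.succ.isLt).lt_of_ne (e.injective.ne Fin.castSucc_lt_succ.ne)
  exact Equiv.ext (congrFun hmono.eq_id)

def inversions {n : ℕ} (e : Equiv.Perm (Fin n)) : Finset (Fin n × Fin n) :=
  {x | x.1 < x.2 ∧ e x.2 < e x.1}

@[simp] lemma mem_inversions {n : ℕ} {e : Equiv.Perm (Fin n)} {x : Fin n × Fin n} :
    x ∈ inversions e ↔ x.1 < x.2 ∧ e x.2 < e x.1 := by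
  simp [inversions]

lemma inversions_trans_adjSwap_ssubset {n k : ℕ} (hk : k + 1 < n) (e : Equiv.Perm (Fin n))
    {p q : Fin n} (hpq : p < q) (hp : (e p : ℕ) = k + 1) (hq : (e q : ℕ) = k) :
    inversions (e.trans (adjSwap k hk)) ⊂ inversions e := by
  have hpq_val : (adjSwap k hk (e p) : ℕ) = k ∧ (adjSwap k hk (e q) : ℕ) = k + 1 := by
    simp [adjSwap_val, hp, hq]
  refine (Finset.ssubset_iff_of_subset ?_).2 ⟨(p, q), ?_, ?_⟩
  · rintro ⟨i, j⟩ hij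
    simp only [mem_inversions, Equiv.trans_apply] at hij ⊢
    refine ⟨hij.1, lt_of_not_ge fun hle => hij.2.not_ge (adjSwap_le_adjSwap hk hle ?_)⟩
    rintro ⟨hi, hj⟩
    have hi : i = q := e.injective (Fin.ext (hi.trans hq.symm))
    have hj : j = p := e.injective (Fin.ext (hj.trans hp.symm))
    exact hpq.not_gt (hi ▸ hj ▸ hij.1)
  · simp only [mem_inversions, Fin.lt_def, hp, hq]
    exact ⟨hpq, by omega⟩
  · simp only [mem_inversions, Equiv.trans_apply, Fin.lt_def, hpq_val]
    omega

section WordPoset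

variable {S : Type*} {comm : S → S → Prop} {w : List S}

lemma WLe.le {i j : Fin w.length} (h : WLe comm w i j) : i ≤ j := by
  induction h with
  | single h => exact h.1
  | tail _ h ih => exact ih.trans h.1

lemma isLinExt_refl : IsLinExt comm w (Equiv.refl _) := fun _ _ h => h.le

lemma wordOf_refl : wordOf w (Equiv.refl _) = w := by
  simp [wordOf, List.ofFn_getElem]

lemma wordOf_trans_adjSwap (e : Fin w.length ≃ Fin w.length) {k : ℕ} (hk : k + 1 < w.length) :
    wordOf w (e.trans (adjSwap k hk)) =
      List.ofFn ((fun i => w.get (e.symm i)) ∘ adjSwap k hk) := by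
  simp [wordOf, adjSwap, Equiv.symm_swap, Function.comp_def]

lemma IsLinExt.wStep_of_wLe {e : Fin w.length ≃ Fin w.length} (he : IsLinExt comm w e)
    {i j : Fin w.length} (hij : WLe comm w i j) (hadj : (e i : ℕ) + 1 = e j) :
    WStep comm w i j := by
  induction hij with
  | single h => exact h
  | @tail b c hib hbc ih =>
    have h1 : e i ≤ e b := he _ _ hib
    have h2 : e b ≤ e c := he _ _ (.single hbc)
    rw [Fin.le_def] at h1 h2
    rcases Nat.lt_or_ge (e b : ℕ) (e c) with hb | hb
    · obtain rfl : b = i := e.injective (Fin.ext (by omega))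
      exact hbc
    · obtain rfl : b = c := e.injective (Fin.ext (by omega))
      exact ih hadj

lemma IsLinExt.trans_adjSwap {e : Fin w.length ≃ Fin w.length} (he : IsLinExt comm w e)
    {k : ℕ} (hk : k + 1 < w.length)
    (h : ∀ i j, (e i : ℕ) = k → (e j : ℕ) = k + 1 → ¬ WLe comm w i j) :
    IsLinExt comm w (e.trans (adjSwap k hk)) :=
  fun i j hij => adjSwap_le_adjSwap hk (he i j hij) fun ⟨hi, hj⟩ => h i j hi hj hij

lemma commClass_wordOf {e : Fin w.length ≃ Fin w.length} (he : IsLinExt comm w e) :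
    CommClass comm w (wordOf w e) := by
  induction h : (inversions e).card using Nat.strong_induction_on generalizing e with
  | _ N ih =>
  by_cases hdesc : ∃ k, ∃ hk : k + 1 < w.length, e.symm ⟨k + 1, hk⟩ < e.symm ⟨k, by omega⟩
  · obtain ⟨k, hk, hlt⟩ := hdesc
    set p := e.symm ⟨k + 1, hk⟩
    set q := e.symm ⟨k, by omega⟩
    have hp : (e p : ℕ) = k + 1 := by simp [p]
    have hq : (e q : ℕ) = k := by simp [q]
    have hcomm : comm (w.get p) (w.get q) := by
      have hnot : ¬ WStep comm w p q := fun hs => by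
        have := he _ _ (.single hs)
        rw [Fin.le_def] at this
        omega
      by_contra hc
      exact hnot ⟨hlt.le, .inr hc⟩
    have he' : IsLinExt comm w (e.trans (adjSwap k hk)) := by
      refine he.trans_adjSwap hk fun i j hi hj hij => hlt.not_ge ?_
      obtain rfl : i = q := e.injective (Fin.ext (hi.trans hq.symm))
      obtain rfl : j = p := e.injective (Fin.ext (hj.trans hp.symm))
      exact hij.le
    have hfewer := Finset.card_lt_card (inversions_trans_adjSwap_ssubset hk e hlt hp hq)
    refine .tail (ih _ (h ▸ hfewer) he' rfl) ?_
    set f : Fin w.length → S := fun i => w.get (e.symm i)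
    have hinv : (f ∘ adjSwap k hk) ∘ adjSwap k hk = f := funext fun i => by simp
    have hmove := commMove_ofFn_comp_adjSwap (comm := comm) (f ∘ adjSwap k hk) hk
      (by simpa [f] using hcomm)
    rwa [hinv, ← wordOf_trans_adjSwap] at hmove
  · have hrefl : e.symm = Equiv.refl _ :=
      Equiv.Perm.eq_refl_of_le_succ _ fun k hk => not_lt.1 (hdesc ⟨k, hk, ·⟩)
    rw [← e.symm_symm, hrefl, Equiv.refl_symm, wordOf_refl]
    exact .refl

lemma IsLinExt.exists_lt_symm_ne {e e' : Fin w.length ≃ Fin w.length} (he' : IsLinExt comm w e')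
    {k : Fin w.length} (hk : w.get (e.symm k) = w.get (e'.symm k)) (hlt : e.symm k < e'.symm k) :
    ∃ j < k, e.symm j ≠ e'.symm j := by
  have hle : e' (e.symm k) ≤ k := by simpa using he' _ _ (.single ⟨hlt.le, .inl hk⟩)
  have hne : e' (e.symm k) ≠ k := fun h => hlt.ne (e'.symm_apply_eq.2 h.symm).symm
  refine ⟨e' (e.symm k), hle.lt_of_ne hne, ?_⟩
  rw [Equiv.symm_apply_apply]
  exact fun h => hne (e.symm.injective h)

lemma IsLinExt.eq_of_wordOf_eq {e e' : Fin w.length ≃ Fin w.length} (he : IsLinExt comm w e)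
    (he' : IsLinExt comm w e') (h : wordOf w e = wordOf w e') : e = e' := by
  have hget : ∀ k, w.get (e.symm k) = w.get (e'.symm k) := congrFun (List.ofFn_inj.1 h)
  have hsymm : ∀ k, e.symm k = e'.symm k := by
    intro k
    induction k using WellFoundedLT.induction with
    | _ k ih =>
    by_contra hne
    rcases lt_or_gt_of_ne hne with hlt | hlt
    · obtain ⟨j, hj, hne'⟩ := he'.exists_lt_symm_ne (hget k) hlt
      exact hne' (ih j hj)
    · obtain ⟨j, hj, hne'⟩ := he.exists_lt_symm_ne (hget k).symm hlt
      exact hne' (ih j hj).symm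
  exact Equiv.symm_bijective.injective (Equiv.ext hsymm)

lemma IsLinExt.exists_wordOf_eq_of_commMove {e : Fin w.length ≃ Fin w.length}
    (he : IsLinExt comm w e) {w' : List S} (hmove : CommMove comm (wordOf w e) w') :
    ∃ e', IsLinExt comm w e' ∧ wordOf w e' = w' := by
  obtain ⟨u, v, a, b, hab, hw, rfl⟩ := hmove
  by_cases hba : a = b
  · exact ⟨e, he, hba ▸ hw⟩
  have hk : u.length + 1 < w.length := by
    have := congrArg List.length hw
    simp [wordOf] at this
    omega
  have ha : w.get (e.symm ⟨u.length, Nat.lt_of_succ_lt hk⟩) = a := by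
    simpa [wordOf, Nat.lt_of_succ_lt hk] using congrArg (·[u.length]?) hw
  have hb : w.get (e.symm ⟨u.length + 1, hk⟩) = b := by
    simpa [wordOf, hk] using congrArg (·[u.length + 1]?) hw
  refine ⟨e.trans (adjSwap u.length hk), he.trans_adjSwap hk fun i j hi hj hij => ?_, ?_⟩
  · have hs := he.wStep_of_wLe hij (by omega)
    obtain rfl : i = e.symm ⟨u.length, Nat.lt_of_succ_lt hk⟩ := e.eq_symm_apply.2 (Fin.ext hi)
    obtain rfl : j = e.symm ⟨u.length + 1, hk⟩ := e.eq_symm_apply.2 (Fin.ext hj)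
    rw [WStep, ha, hb] at hs
    exact hs.2.elim hba (· hab)
  · rw [wordOf_trans_adjSwap]
    exact ofFn_comp_adjSwap_of_eq hw rfl hk

lemma exists_isLinExt_wordOf_eq {w' : List S} (hw : CommClass comm w w') :
    ∃ e, IsLinExt comm w e ∧ wordOf w e = w' := by
  induction hw with
  | refl => exact ⟨_, isLinExt_refl, wordOf_refl⟩
  | tail _ hmove ih =>
    obtain ⟨e, he, rfl⟩ := ih
    exact he.exists_wordOf_eq_of_commMove hmove

end WordPoset

theorem wordOf_surjective_and_card_general {S : Type*} (comm : S → S → Prop)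
    (w : List S) :
    (∀ w', CommClass comm w w' →
      ∃ e : Fin w.length ≃ Fin w.length, IsLinExt comm w e ∧ wordOf w e = w') ∧
    Nat.card {w' : List S // CommClass comm w w'} =
      Nat.card {e : Fin w.length ≃ Fin w.length // IsLinExt comm w e} := by
  refine ⟨fun _ => exists_isLinExt_wordOf_eq, ?_⟩
  let toWord (e : {e // IsLinExt comm w e}) : {w' // CommClass comm w w'} :=
    ⟨wordOf w e, commClass_wordOf e.2⟩
  have hbij : Function.Bijective toWord := by
    refine ⟨fun e e' h => Subtype.ext (e.2.eq_of_wordOf_eq e'.2 (congrArg Subtype.val h)), ?_⟩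
    rintro ⟨w', hw'⟩
    obtain ⟨e, he, rfl⟩ := exists_isLinExt_wordOf_eq hw'
    exact ⟨⟨e, he⟩, rfl⟩
  exact (Nat.card_eq_of_bijective toWord hbij).symm

theorem wordOf_surjective_and_card {S : Type*} (comm : S → S → Prop)
    (hsym : ∀ a b, comm a b → comm b a) (hirr : ∀ a, ¬ comm a a) (w : List S) :
    (∀ w', CommClass comm w w' →
      ∃ e : Fin w.length ≃ Fin w.length, IsLinExt comm w e ∧ wordOf w e = w') ∧
    Nat.card {w' : List S // CommClass comm w w'} =
      Nat.card {e : Fin w.length ≃ Fin w.length // IsLinExt comm w e} :=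
  wordOf_surjective_and_card_general comm w
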